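/- If the one-bit diff invariant holds — namely, for an address a with position map entry (a_h, o, q), the holding block D[a_h] decrypts to the fresh data d, and either (i) the main block D[a] decrypts to d (in which case the o-th bit of D[a]'s plaintext equals q and q equals the o-th bit of d), or (ii) D[a] decrypts to stale data whose o-th bit differs from the o-th bit of d = q — then the read procedure (return the main block's plaintext if its o-th bit equals q, otherwise the holding block's plaintext) always returns the fresh data d. -/

import Mathlib

theorem one_bit_diff_read_correct (B : ℕ) (d m : Fin B → Bool)
    (o : Fin B) (q : Bool) (hq : q = d o)
    (hinv : m = d ∨ m o ≠ d o) :
    (if m o = q then m else d) = d := by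
  subst hq
  rcases hinv with rfl | hstale
  · exact if_pos rfl
  · exact if_neg hstale
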